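/- The number (1/(n+1))·C(n+k,n)·k is an integer for all integers n ≥ 1 and k ≥ 0; equivalently, (n+1) divides k·C(n+k,n). -/
import Mathlib

/-- `(n+1)` divides `k·C(n+k,n)` for all `n ≥ 1`, `k ≥ 0`;
equivalently `(1/(n+1))·C(n+k,n)·k` is an integer. -/
theorem succ_dvd_mul_choose (n k : ℕ) (hn : 1 ≤ n) :
    (n + 1) ∣ k * Nat.choose (n + k) n := by
  refine ⟨Nat.choose (n + k) (n + 1), ?_⟩
  have h := Nat.choose_succ_right_eq (n + k) n
  simp only [Nat.add_sub_cancel_left] at h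
  rw [mul_comm k, ← h, mul_comm]
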